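/- arXiv:0804.4618 — 3 statements merged into one kernel-verified Lean document; each statement's English description precedes it below -/
import Mathlib

section
/- (Orthogonalization time bound.) Let h be self-adjoint on a finite-dimensional Hilbert space and φ a unit vector with (Δh)_φ > 0. If t > 0 satisfies ⟨φ, e^{−iht}φ⟩ = 0, then t ≥ π / (2 (Δh)_φ). -/
open scoped InnerProductSpace
open Complex Filter Asymptotics

noncomputable section

variable {H : Type*} [NormedAddCommGroup H] [InnerProductSpace ℂ H] [FiniteDimensional ℂ H]

/-- |φ⟩⟨ψ| -/
def ketbra (φ ψ : H) : H →L[ℂ] H := (innerSL ℂ ψ).smulRight φ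

def tr (A : H →L[ℂ] H) : ℂ := LinearMap.trace ℂ H A.toLinearMap

/-- e^{-iht} -/
def timeEv (h : H →L[ℂ] H) (t : ℝ) : H →L[ℂ] H :=
  NormedSpace.exp ((-(Complex.I * (t : ℂ))) • h)

def expVec (h : H →L[ℂ] H) (φ : H) : ℝ := (⟪φ, h φ⟫_ℂ).re
def varVec (h : H →L[ℂ] H) (φ : H) : ℝ := (⟪φ, h (h φ)⟫_ℂ).re - (expVec h φ) ^ 2
def expMix (h ρ : H →L[ℂ] H) : ℝ := (tr (h ∘L ρ)).re
def varMix (h ρ : H →L[ℂ] H) : ℝ := (tr (h ∘L h ∘L ρ)).re - (expMix h ρ) ^ 2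
def survP (h : H →L[ℂ] H) (φ : H) (t : ℝ) : ℝ := ‖⟪φ, timeEv h t φ⟫_ℂ‖ ^ 2
def survPMix (h ρ Pr : H →L[ℂ] H) (t : ℝ) : ℝ :=
  (tr (Pr ∘L timeEv h t ∘L ρ ∘L timeEv h (-t))).re

/-! In an eigenbasis `(eᵢ)` of `h`, the weights `pᵢ = |⟨eᵢ, φ⟩|²` form a probability distribution
on the eigenvalues `λᵢ` with mean `m = ⟨h⟩_φ` and variance `(Δh)_φ²`, and orthogonality reads
`∑ pᵢ e^{-itλᵢ} = 0`, so also `∑ pᵢ cos (t (λᵢ - m)) = 0`. Averaging the elementary inequality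
`π²/4 ≤ x² + π cos x` over `x = t (λᵢ - m)` gives `π²/4 ≤ t² (Δh)_φ²`. -/

open Real

lemma Real.pi_sq_div_four_le_sq_add_pi_mul_cos_of_nonneg {x : ℝ} (hx : 0 ≤ x) :
    π ^ 2 / 4 ≤ x ^ 2 + π * cos x := by
  rcases le_or_gt x (π / 2) with hle | hgt
  · -- with `y = π/2 - x`, the cubic bound on `sin y` leaves `y² (1 - π y / 6) ≥ 0`
    obtain ⟨y, rfl⟩ : ∃ y, x = π / 2 - y := ⟨π / 2 - x, by ring⟩
    have hsin : y - y ^ 3 / 6 ≤ cos (π / 2 - y) := by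
      rw [cos_pi_div_two_sub]; exact sin_ge_sub_cube (by linarith)
    have hπy : π * y ≤ 6 := by nlinarith [pi_lt_d2, pi_pos]
    nlinarith [mul_nonneg (sq_nonneg y) (sub_nonneg.2 hπy),
      mul_le_mul_of_nonneg_left hsin pi_pos.le]
  · have hsin : sin (x - π / 2) ≤ x - π / 2 := sin_le (by linarith)
    rw [sin_sub_pi_div_two] at hsin
    nlinarith [sq_nonneg (x - π / 2), pi_pos]

lemma Real.pi_sq_div_four_le_sq_add_pi_mul_cos (x : ℝ) : π ^ 2 / 4 ≤ x ^ 2 + π * cos x := by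
  rcases le_total 0 x with hx | hx
  · exact pi_sq_div_four_le_sq_add_pi_mul_cos_of_nonneg hx
  · simpa [cos_neg] using pi_sq_div_four_le_sq_add_pi_mul_cos_of_nonneg (neg_nonneg.2 hx)

theorem NormedSpace.exp_apply_of_apply_eq_smul {𝕜 E : Type*} [RCLike 𝕜] [NormedAddCommGroup E]
    [NormedSpace 𝕜 E] [CompleteSpace E] {A : E →L[𝕜] E} {c : 𝕜} {v : E} (hv : A v = c • v) :
    NormedSpace.exp A v = NormedSpace.exp c • v := by
  have hpow (n : ℕ) : (A ^ n) v = c ^ n • v := by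
    induction n with
    | zero => simp
    | succ n ih => rw [pow_succ, mul_apply_eq_comp, hv, map_smul, ih, smul_smul, pow_succ']
  refine ((exp_series_hasSum_exp' (𝕂 := 𝕜) A).mapL (ContinuousLinearMap.apply 𝕜 E v)).unique ?_
  convert (exp_series_hasSum_exp' (𝕂 := 𝕜) c).smul_const v using 2 with n
  simp [hpow, smul_smul]

theorem OrthonormalBasis.inner_apply_self_eq_sum {ι 𝕜 E : Type*} [Fintype ι] [RCLike 𝕜]
    [NormedAddCommGroup E] [InnerProductSpace 𝕜 E] (b : OrthonormalBasis ι 𝕜 E) {A : E →L[𝕜] E}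
    {μ : ι → 𝕜} (hA : ∀ i, A (b i) = μ i • b i) (φ : E) :
    ⟪φ, A φ⟫_𝕜 = ∑ i, ((‖⟪b i, φ⟫_𝕜‖ ^ 2 : ℝ) : 𝕜) * μ i := by
  nth_rewrite 2 [← b.sum_repr' φ]
  simp only [map_sum, map_smul, hA, inner_sum, inner_smul_right]
  refine Finset.sum_congr rfl fun i _ => ?_
  rw [← inner_conj_symm φ (b i), mul_left_comm, RCLike.mul_conj, RCLike.ofReal_pow, mul_comm]

theorem sum_mul_cos_eq_zero_of_sum_mul_exp_eq_zero {ι : Type*} [Fintype ι] {p lam : ι → ℝ} {t : ℝ}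
    (h : ∑ i, (p i : ℂ) * Complex.exp (-(I * t * lam i)) = 0) (m : ℝ) :
    ∑ i, p i * Real.cos (t * (lam i - m)) = 0 := by
  have hre := congrArg (fun z => (Complex.exp (I * t * m) * z).re) h
  simp only [Finset.mul_sum, Complex.re_sum, mul_zero, zero_re] at hre
  rw [← hre]
  refine Finset.sum_congr rfl fun i _ => ?_
  rw [mul_left_comm, ← Complex.exp_add,
    show I * t * m + -(I * t * lam i) = ((-(t * (lam i - m)) : ℝ) : ℂ) * I by push_cast; ring,
    re_ofReal_mul, exp_ofReal_mul_I_re, Real.cos_neg]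

theorem sum_mul_sq_sub_mean_eq {ι : Type*} [Fintype ι] {p lam : ι → ℝ} (hp : ∑ i, p i = 1) :
    ∑ i, p i * (lam i - ∑ j, p j * lam j) ^ 2 = ∑ i, p i * lam i ^ 2 - (∑ i, p i * lam i) ^ 2 := by
  set m := ∑ i, p i * lam i
  have hexpand (i : ι) :
      p i * (lam i - m) ^ 2 = p i * lam i ^ 2 - 2 * m * (p i * lam i) + m ^ 2 * p i := by
    ring
  simp only [hexpand, Finset.sum_add_distrib, Finset.sum_sub_distrib, ← Finset.mul_sum, hp]
  ring

theorem pi_sq_div_four_le_sq_mul_variance_of_sum_mul_exp_eq_zero {ι : Type*} [Fintype ι]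
    {p lam : ι → ℝ} (hp : ∀ i, 0 ≤ p i) (hp1 : ∑ i, p i = 1) {t : ℝ}
    (horth : ∑ i, (p i : ℂ) * Complex.exp (-(I * t * lam i)) = 0) :
    π ^ 2 / 4 ≤ t ^ 2 * (∑ i, p i * lam i ^ 2 - (∑ i, p i * lam i) ^ 2) := by
  rw [← sum_mul_sq_sub_mean_eq hp1]
  set m := ∑ i, p i * lam i
  have hcos := sum_mul_cos_eq_zero_of_sum_mul_exp_eq_zero horth m
  calc π ^ 2 / 4 = ∑ i, p i * (π ^ 2 / 4) := by rw [← Finset.sum_mul, hp1, one_mul]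
    _ ≤ ∑ i, p i * ((t * (lam i - m)) ^ 2 + π * Real.cos (t * (lam i - m))) :=
      Finset.sum_le_sum fun i _ =>
        mul_le_mul_of_nonneg_left (pi_sq_div_four_le_sq_add_pi_mul_cos _) (hp i)
    _ = t ^ 2 * ∑ i, p i * (lam i - m) ^ 2 + π * ∑ i, p i * Real.cos (t * (lam i - m)) := by
      simp only [Finset.mul_sum, ← Finset.sum_add_distrib]
      exact Finset.sum_congr rfl fun i _ => by ring
    _ = t ^ 2 * ∑ i, p i * (lam i - m) ^ 2 := by rw [hcos, mul_zero, add_zero]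

theorem IsSelfAdjoint.exists_spectral_weights {h : H →L[ℂ] H} (hsa : IsSelfAdjoint h) (φ : H) :
    ∃ (n : ℕ) (p lam : Fin n → ℝ), (∀ i, 0 ≤ p i) ∧ ∑ i, p i = ‖φ‖ ^ 2 ∧
      expVec h φ = ∑ i, p i * lam i ∧ (⟪φ, h (h φ)⟫_ℂ).re = ∑ i, p i * lam i ^ 2 ∧
      ∀ t : ℝ, ⟪φ, timeEv h t φ⟫_ℂ = ∑ i, (p i : ℂ) * Complex.exp (-(I * t * lam i)) := by
  have hsym := ContinuousLinearMap.isSelfAdjoint_iff_isSymmetric.mp hsa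
  set b := hsym.eigenvectorBasis rfl
  set lam := hsym.eigenvalues rfl
  have heig (i) : h (b i) = (lam i : ℂ) • b i := hsym.apply_eigenvectorBasis rfl i
  have heig2 (i) : (h ∘L h) (b i) = ((lam i : ℂ) ^ 2) • b i := by
    rw [ContinuousLinearMap.comp_apply, heig, map_smul, heig, smul_smul, sq]
  have hev (t : ℝ) (i) : timeEv h t (b i) = Complex.exp (-(I * t * lam i)) • b i := by
    rw [timeEv, Complex.exp_eq_exp_ℂ]
    refine NormedSpace.exp_apply_of_apply_eq_smul ?_
    rw [smul_apply, heig, smul_smul, neg_mul]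
  refine ⟨_, fun i => ‖⟪b i, φ⟫_ℂ‖ ^ 2, lam, fun i => by positivity,
    b.sum_sq_norm_inner_right φ, ?_, ?_, fun t => b.inner_apply_self_eq_sum (hev t) φ⟩
  · rw [expVec, b.inner_apply_self_eq_sum heig]
    simp only [Complex.coe_algebraMap, Complex.re_sum, Complex.re_ofReal_mul, Complex.ofReal_re]
  · rw [← ContinuousLinearMap.comp_apply, b.inner_apply_self_eq_sum heig2]
    simp only [Complex.coe_algebraMap, ← Complex.ofReal_pow, Complex.re_sum, Complex.re_ofReal_mul,
      Complex.ofReal_re]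

theorem stmt9_general (h : H →L[ℂ] H) (hsa : IsSelfAdjoint h) (φ : H) (hφ : ‖φ‖ = 1)
    (t : ℝ) (ht : 0 < t) (horth : ⟪φ, timeEv h t φ⟫_ℂ = 0) :
    t ≥ Real.pi / (2 * Real.sqrt (varVec h φ)) := by
  obtain ⟨n, p, lam, hp, hp1, hmean, hsq, hev⟩ := hsa.exists_spectral_weights φ
  have hvar : varVec h φ = ∑ i, p i * lam i ^ 2 - (∑ i, p i * lam i) ^ 2 := by
    rw [varVec, hsq, hmean]
  have hbound : π ^ 2 / 4 ≤ t ^ 2 * varVec h φ := hvar ▸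
    pi_sq_div_four_le_sq_mul_variance_of_sum_mul_exp_eq_zero hp (by rw [hp1, hφ, one_pow])
      (hev t ▸ horth)
  have hpos : 0 < varVec h φ := by
    by_contra! hle
    nlinarith [pi_pos, sq_nonneg t]
  have hsqrt : π / 2 ≤ t * √(varVec h φ) :=
    (pow_le_pow_iff_left₀ (by positivity) (by positivity) two_ne_zero).1
      (by rw [mul_pow, sq_sqrt hpos.le]; linarith)
  rw [ge_iff_le, div_le_iff₀ (by positivity)]
  linarith

theorem stmt9 (h : H →L[ℂ] H) (hsa : IsSelfAdjoint h) (φ : H) (hφ : ‖φ‖ = 1)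
    (hΔ : 0 < Real.sqrt (varVec h φ))
    (t : ℝ) (ht : 0 < t) (horth : ⟪φ, timeEv h t φ⟫_ℂ = 0) :
    t ≥ Real.pi / (2 * Real.sqrt (varVec h φ)) :=
  stmt9_general h hsa φ hφ t ht horth
end
end

section
/- (Mandelstam–Tamm inequality for mixed states.) Let ρ be a density operator on a finite-dimensional Hilbert space, Π the orthogonal projection onto the range of ρ, h self-adjoint, and P_ρ(t) = Tr(Π e^{−iht} ρ e^{iht}). Then for all t ∈ ℝ, |P′_ρ(t)| ≤ 2 (Δh)_ρ √(P_ρ(t)(1 − P_ρ(t))), where (Δh)²_ρ = Tr(h²ρ) − (Tr(hρ))². -/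
/-!
Differentiating `P(t) = tr (Π ρₜ)` with `ρₜ = e^{-iht} ρ e^{iht}` gives `P'(t) = 2 Im tr (Π h ρₜ)`.
The Robertson uncertainty relation for the state `ρₜ` bounds `|Im tr (A B ρₜ)|` by
`(ΔA)_{ρₜ} (ΔB)_{ρₜ}`: after centering `A` and `B` (which leaves the imaginary part unchanged),
it is the Cauchy–Schwarz inequality for the semi-inner product `(A, B) ↦ tr (A B ρₜ)`.
For the projection `Π` one has `(ΔΠ)²_{ρₜ} = P(t) (1 - P(t))`, and `(Δh)_{ρₜ} = (Δh)_ρ` because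
`e^{-iht}` is unitary and commutes with `h`.
-/

open scoped InnerProductSpace
open Complex Filter Asymptotics

noncomputable section

variable {H : Type*} [NormedAddCommGroup H] [InnerProductSpace ℂ H] [FiniteDimensional ℂ H]

set_option linter.unusedSectionVars false

lemma tr_sub (A B : H →L[ℂ] H) : tr (A - B) = tr A - tr B := by
  simp [tr]

lemma tr_smul (c : ℂ) (A : H →L[ℂ] H) : tr (c • A) = c * tr A := by
  simp [tr]

lemma tr_mul_comm (A B : H →L[ℂ] H) : tr (A * B) = tr (B * A) :=
  LinearMap.trace_mul_comm ℂ (A : H →ₗ[ℂ] H) B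

lemma tr_star_mul_eq_sum_inner {ι : Type*} [Fintype ι] (b : OrthonormalBasis ι ℂ H)
    (X Y : H →L[ℂ] H) : tr (star X * Y) = ∑ i, ⟪X (b i), Y (b i)⟫_ℂ := by
  simp only [tr, LinearMap.trace_eq_sum_inner _ b, ContinuousLinearMap.coe_coe,
    mul_apply_eq_comp, ContinuousLinearMap.star_eq_adjoint,
    ContinuousLinearMap.adjoint_inner_right]

lemma tr_star (A : H →L[ℂ] H) : tr (star A) = starRingEnd ℂ (tr A) := by
  simpa [tr_star_mul_eq_sum_inner (stdOrthonormalBasis ℂ H), tr,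
    LinearMap.trace_eq_sum_inner _ (stdOrthonormalBasis ℂ H)] using
    tr_star_mul_eq_sum_inner (stdOrthonormalBasis ℂ H) A 1

lemma im_tr_mul_eq_zero {A B : H →L[ℂ] H} (hA : IsSelfAdjoint A) (hB : IsSelfAdjoint B) :
    (tr (A * B)).im = 0 := by
  rw [← Complex.conj_eq_iff_im, ← tr_star, star_mul, hA.star_eq, hB.star_eq, tr_mul_comm]

lemma re_tr_star_mul_self_eq_sum {ι : Type*} [Fintype ι] (b : OrthonormalBasis ι ℂ H)
    (X : H →L[ℂ] H) : (tr (star X * X)).re = ∑ i, ‖X (b i)‖ ^ 2 := by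
  simp [tr_star_mul_eq_sum_inner b, inner_self_eq_norm_sq_to_K, ← Complex.ofReal_pow]

lemma norm_tr_star_mul_le (X Y : H →L[ℂ] H) :
    ‖tr (star X * Y)‖ ≤ √(tr (star X * X)).re * √(tr (star Y * Y)).re := by
  let b := stdOrthonormalBasis ℂ H
  rw [tr_star_mul_eq_sum_inner b, re_tr_star_mul_self_eq_sum b, re_tr_star_mul_self_eq_sum b]
  calc ‖∑ i, ⟪X (b i), Y (b i)⟫_ℂ‖ ≤ ∑ i, ‖X (b i)‖ * ‖Y (b i)‖ :=
        (norm_sum_le _ _).trans (Finset.sum_le_sum fun i _ ↦ norm_inner_le_norm _ _)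
    _ ≤ _ := Real.sum_mul_le_sqrt_mul_sqrt _ _ _

lemma expMix_eq (A σ : H →L[ℂ] H) : expMix A σ = (tr (A * σ)).re := rfl

lemma varMix_eq (A σ : H →L[ℂ] H) :
    varMix A σ = (tr (A * A * σ)).re - (tr (A * σ)).re ^ 2 := by
  rw [varMix, expMix, mul_assoc]
  rfl

lemma norm_tr_mul_mul_le {σ A B : H →L[ℂ] H} (hσ : σ.IsPositive) (hA : IsSelfAdjoint A)
    (hB : IsSelfAdjoint B) :
    ‖tr (A * B * σ)‖ ≤ √(tr (A * A * σ)).re * √(tr (B * B * σ)).re := by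
  -- With `σ = s⋆ s`, `tr (A B σ)` is the Hilbert–Schmidt product of `A s⋆` and `B s⋆`.
  obtain ⟨s, rfl⟩ := CStarAlgebra.nonneg_iff_eq_star_mul_self.mp
    ((ContinuousLinearMap.nonneg_iff_isPositive σ).mpr hσ)
  have h_cyc {C D : H →L[ℂ] H} (hC : IsSelfAdjoint C) :
      tr (C * D * (star s * s)) = tr (star (C * star s) * (D * star s)) := by
    rw [star_mul, star_star, hC.star_eq, ← mul_assoc, tr_mul_comm]
    simp only [mul_assoc]
  rw [h_cyc hA, h_cyc hA, h_cyc hB]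
  exact norm_tr_star_mul_le _ _

lemma tr_sub_smul_one_mul_sub_smul_one_mul (A B σ : H →L[ℂ] H) (a b : ℂ) :
    tr ((A - a • 1) * (B - b • 1) * σ)
      = tr (A * B * σ) - b * tr (A * σ) - a * tr (B * σ) + a * b * tr σ := by
  simp only [sub_mul, mul_sub, smul_mul_assoc, mul_smul_comm, one_mul, mul_one,
    tr_sub, tr_smul]
  ring

lemma varMix_eq_re_tr_centered_sq {A σ : H →L[ℂ] H} (hσtr : tr σ = 1) :
    varMix A σ = (tr ((A - (expMix A σ : ℂ) • 1) * (A - (expMix A σ : ℂ) • 1) * σ)).re := by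
  rw [tr_sub_smul_one_mul_sub_smul_one_mul, hσtr, varMix_eq]
  simp only [Complex.add_re, Complex.sub_re, Complex.re_ofReal_mul, mul_one, Complex.ofReal_re,
    ← Complex.ofReal_mul, expMix_eq]
  ring

lemma im_tr_centered_mul_centered {A B σ : H →L[ℂ] H} (hA : IsSelfAdjoint A)
    (hB : IsSelfAdjoint B) (hσ : IsSelfAdjoint σ) (hσtr : tr σ = 1) (a b : ℝ) :
    (tr ((A - (a : ℂ) • 1) * (B - (b : ℂ) • 1) * σ)).im = (tr (A * B * σ)).im := by
  rw [tr_sub_smul_one_mul_sub_smul_one_mul, hσtr]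
  simp [Complex.sub_im, Complex.add_im, im_tr_mul_eq_zero hA hσ,
    im_tr_mul_eq_zero hB hσ, ← Complex.ofReal_mul]

lemma IsSelfAdjoint.sub_ofReal_smul_one {A : H →L[ℂ] H} (hA : IsSelfAdjoint A) (a : ℝ) :
    IsSelfAdjoint (A - (a : ℂ) • 1) :=
  hA.sub (.smul (Complex.conj_ofReal a) (.one _))

theorem abs_im_tr_mul_mul_le_sqrt_varMix {σ A B : H →L[ℂ] H} (hσ : σ.IsPositive)
    (hσtr : tr σ = 1) (hA : IsSelfAdjoint A) (hB : IsSelfAdjoint B) :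
    |(tr (A * B * σ)).im| ≤ √(varMix A σ) * √(varMix B σ) := by
  rw [varMix_eq_re_tr_centered_sq hσtr, varMix_eq_re_tr_centered_sq hσtr,
    ← im_tr_centered_mul_centered hA hB hσ.isSelfAdjoint hσtr (expMix A σ) (expMix B σ)]
  exact (Complex.abs_im_le_norm _).trans
    (norm_tr_mul_mul_le hσ (hA.sub_ofReal_smul_one _) (hB.sub_ofReal_smul_one _))

lemma varMix_of_isIdempotentElem {P : H →L[ℂ] H} (hP : IsIdempotentElem P) (σ : H →L[ℂ] H) :
    varMix P σ = expMix P σ * (1 - expMix P σ) := by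
  rw [varMix_eq, hP.eq, expMix_eq]
  ring

lemma hasDerivAt_re_tr {f : ℝ → H →L[ℂ] H} {f' : H →L[ℂ] H} {t : ℝ} (hf : HasDerivAt f f' t) :
    HasDerivAt (fun s ↦ (tr (f s)).re) (tr f').re t :=
  let reTr : (H →L[ℂ] H) →ₗ[ℝ] ℝ := Complex.reLm.comp
    (((LinearMap.trace ℂ H).comp (ContinuousLinearMap.coeLM ℂ)).restrictScalars ℝ)
  reTr.toContinuousLinearMap.hasFDerivAt.comp_hasDerivAt t hf

lemma re_tr_mul_neg_I_smul_commutator {P h σ : H →L[ℂ] H} (hP : IsSelfAdjoint P)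
    (hh : IsSelfAdjoint h) (hσ : IsSelfAdjoint σ) :
    (tr (P * (-I • (h * σ - σ * h)))).re = 2 * (tr (P * h * σ)).im := by
  have h_conj : tr (P * (σ * h)) = starRingEnd ℂ (tr (P * h * σ)) := by
    rw [← tr_star, star_mul, star_mul, hP.star_eq, hh.star_eq, hσ.star_eq, tr_mul_comm, mul_assoc]
  rw [mul_smul_comm, tr_smul, mul_sub, tr_sub, h_conj, ← mul_assoc, Complex.sub_conj]
  simp

lemma timeEv_eq_exp_smul (h : H →L[ℂ] H) (t : ℝ) :
    timeEv h t = NormedSpace.exp (t • (-I • h)) := by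
  rw [timeEv, ← smul_assoc, Complex.real_smul]
  congr 2
  ring

lemma hasDerivAt_timeEv (h : H →L[ℂ] H) (t : ℝ) :
    HasDerivAt (timeEv h) ((-I • h) * timeEv h t) t := by
  rw [funext (timeEv_eq_exp_smul h)]
  exact hasDerivAt_exp_smul_const' (-I • h) t

lemma commute_timeEv (h : H →L[ℂ] H) (t : ℝ) : Commute h (timeEv h t) :=
  ((Commute.refl h).smul_right _).exp_right

lemma star_timeEv {h : H →L[ℂ] H} (hh : IsSelfAdjoint h) (t : ℝ) :
    star (timeEv h t) = timeEv h (-t) := by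
  rw [timeEv, timeEv, NormedSpace.star_exp, star_smul, hh.star_eq]
  simp [Complex.conj_I]

lemma timeEv_mem_unitary {h : H →L[ℂ] H} (hh : IsSelfAdjoint h) (t : ℝ) :
    timeEv h t ∈ unitary (H →L[ℂ] H) :=
  let +nondep : NormedAlgebra ℚ (H →L[ℂ] H) := .restrictScalars ℚ ℂ _
  NormedSpace.exp_mem_unitary_of_mem_skewAdjoint
    (hh.smul_mem_skewAdjoint (by simp [skewAdjoint.mem_iff, Complex.conj_I]))

/-- `ρₜ = e^{-iht} ρ e^{iht}` -/
def evolve (h ρ : H →L[ℂ] H) (t : ℝ) : H →L[ℂ] H := timeEv h t * ρ * timeEv h (-t)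

lemma survPMix_eq_expMix_evolve (h ρ P : H →L[ℂ] H) (t : ℝ) :
    survPMix h ρ P t = expMix P (evolve h ρ t) := rfl

lemma isPositive_evolve {h ρ : H →L[ℂ] H} (hh : IsSelfAdjoint h) (hρ : ρ.IsPositive) (t : ℝ) :
    (evolve h ρ t).IsPositive := by
  have h_conj := hρ.conj_adjoint (timeEv h t)
  rwa [← ContinuousLinearMap.star_eq_adjoint, star_timeEv hh] at h_conj

lemma tr_mul_evolve_of_commute {h : H →L[ℂ] H} (hh : IsSelfAdjoint h) {A : H →L[ℂ] H} (t : ℝ)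
    (hA : Commute A (timeEv h t)) (ρ : H →L[ℂ] H) : tr (A * evolve h ρ t) = tr (A * ρ) := by
  have h_inv : timeEv h (-t) * timeEv h t = 1 := by
    rw [← star_timeEv hh]
    exact Unitary.star_mul_self_of_mem (timeEv_mem_unitary hh t)
  rw [evolve, ← mul_assoc, ← mul_assoc, hA.eq, mul_assoc, mul_assoc, tr_mul_comm]
  simp only [mul_assoc, h_inv, mul_one]

lemma tr_evolve {h : H →L[ℂ] H} (hh : IsSelfAdjoint h) (ρ : H →L[ℂ] H) (t : ℝ) :
    tr (evolve h ρ t) = tr ρ := by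
  simpa using tr_mul_evolve_of_commute hh t (Commute.one_left _) ρ

lemma varMix_evolve {h : H →L[ℂ] H} (hh : IsSelfAdjoint h) (ρ : H →L[ℂ] H) (t : ℝ) :
    varMix h (evolve h ρ t) = varMix h ρ := by
  have hcomm := commute_timeEv h t
  rw [varMix_eq, varMix_eq, tr_mul_evolve_of_commute hh t (hcomm.mul_left hcomm),
    tr_mul_evolve_of_commute hh t hcomm]

lemma hasDerivAt_evolve (h ρ : H →L[ℂ] H) (t : ℝ) :
    HasDerivAt (evolve h ρ) (-I • (h * evolve h ρ t - evolve h ρ t * h)) t := by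
  have hV : HasDerivAt (fun s ↦ timeEv h (-s)) (-((-I • h) * timeEv h (-t))) t := by
    have h_comp := (hasDerivAt_timeEv h (-t)).scomp t (hasDerivAt_neg t)
    rwa [neg_one_smul] at h_comp
  unfold evolve
  refine (((hasDerivAt_timeEv h t).mul_const ρ).mul hV).congr_deriv ?_
  simp only [smul_mul_assoc, mul_smul_comm, mul_assoc, mul_neg, (commute_timeEv h (-t)).eq]
  module

lemma hasDerivAt_survPMix {h ρ P : H →L[ℂ] H} (hh : IsSelfAdjoint h) (hρ : ρ.IsPositive)
    (hP : IsSelfAdjoint P) (t : ℝ) :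
    HasDerivAt (survPMix h ρ P) (2 * (tr (P * h * evolve h ρ t)).im) t := by
  rw [← re_tr_mul_neg_I_smul_commutator hP hh (isPositive_evolve hh hρ t).isSelfAdjoint]
  exact hasDerivAt_re_tr ((hasDerivAt_evolve h ρ t).const_mul P)

theorem stmt16_general (h ρ Pr : H →L[ℂ] H) (hsa : IsSelfAdjoint h)
    (hρpos : ρ.IsPositive) (hρtr : tr ρ = 1)
    (hPrsa : IsSelfAdjoint Pr) (hPrid : IsIdempotentElem Pr) :
    ∀ t : ℝ, |deriv (survPMix h ρ Pr) t|
      ≤ 2 * Real.sqrt (varMix h ρ)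
          * Real.sqrt (survPMix h ρ Pr t * (1 - survPMix h ρ Pr t)) := by
  intro t
  have hσ := isPositive_evolve hsa hρpos t
  have hσtr : tr (evolve h ρ t) = 1 := (tr_evolve hsa ρ t).trans hρtr
  rw [(hasDerivAt_survPMix hsa hρpos hPrsa t).deriv, survPMix_eq_expMix_evolve,
    ← varMix_of_isIdempotentElem hPrid, ← varMix_evolve hsa ρ t, abs_mul, abs_two,
    mul_assoc 2, mul_comm √(varMix h _)]
  gcongr
  exact abs_im_tr_mul_mul_le_sqrt_varMix hσ hσtr hPrsa hsa

theorem stmt16 (h ρ Pr : H →L[ℂ] H) (hsa : IsSelfAdjoint h)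
    (hρpos : ρ.IsPositive) (hρtr : tr ρ = 1)
    (hPrsa : IsSelfAdjoint Pr) (hPrid : IsIdempotentElem Pr)
    (hPrrange : LinearMap.range Pr.toLinearMap = LinearMap.range ρ.toLinearMap) :
    ∀ t : ℝ, |deriv (survPMix h ρ Pr) t|
      ≤ 2 * Real.sqrt (varMix h ρ)
          * Real.sqrt (survPMix h ρ Pr t * (1 - survPMix h ρ Pr t)) :=
  stmt16_general h ρ Pr hsa hρpos hρtr hPrsa hPrid
end
end

section
/- (Mixed intelligent states.) Let ω₁ < ω₂ be eigenvalues of a self-adjoint operator h on a finite-dimensional Hilbert space, and suppose ψₖ = φ_{k,1} + φ_{k,2} for k = 1,…,n with hφ_{k,ε} = ω_ε φ_{k,ε} and ⟨φ_{k,ε}, φ_{l,η}⟩ = (1/2) δ_{kl} δ_{εη}. Let ρ = Σₖ λₖ |ψₖ⟩⟨ψₖ| with λₖ > 0 and Σₖ λₖ = 1, and Π = Σₖ |ψₖ⟩⟨ψₖ|. Then Tr(Π e^{−iht} ρ e^{iht}) = cos²((Δh)_ρ t) for all t ∈ ℝ, with (Δh)_ρ = (ω₂ − ω₁)/2. -/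
/-!
Each ψₖ is an equal-weight superposition of eigenvectors of h for ω₁ and ω₂, and these
eigenvectors are orthogonal across different k. Hence every operator A acting on them by scalars
a₁, a₂ satisfies ⟨ψₖ, A ψₗ⟩ = δₖₗ (a₁ + a₂)/2. With A = h and A = h² this gives mean (ω₁ + ω₂)/2
and second moment (ω₁² + ω₂²)/2, so (Δh)_ρ = (ω₂ − ω₁)/2. With A = e^{-iht} it gives
ρ e^{iht} ψₗ = λₗ a(−t) ψₗ for a(t) = (e^{-iω₁t} + e^{-iω₂t})/2, so the survival probability is
a(−t) a(t) = |a(t)|² = cos²((ω₂ − ω₁)t/2).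
-/

open scoped InnerProductSpace
open Complex Filter Asymptotics

noncomputable section

variable {H : Type*} [NormedAddCommGroup H] [InnerProductSpace ℂ H] [FiniteDimensional ℂ H]

open ComplexConjugate

section Exp

variable {𝕜 E : Type*} [RCLike 𝕜] [NormedAddCommGroup E] [NormedSpace 𝕜 E]

theorem pow_apply_of_apply_eq_smul {T : E →L[𝕜] E} {c : 𝕜} {x : E} (hx : T x = c • x) (m : ℕ) :
    (T ^ m) x = c ^ m • x := by
  induction m with
  | zero => simp
  | succ m ih => rw [pow_succ', mul_apply_eq_comp, ih, map_smul, hx, smul_smul, pow_succ]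

theorem exp_apply_of_apply_eq_smul [CompleteSpace E] {T : E →L[𝕜] E} {c : 𝕜} {x : E}
    (hx : T x = c • x) : NormedSpace.exp T x = NormedSpace.exp c • x := by
  refine ((NormedSpace.exp_series_hasSum_exp' (𝕂 := 𝕜) T).mapL
    (ContinuousLinearMap.apply 𝕜 E x)).unique ?_
  convert (NormedSpace.exp_series_hasSum_exp' (𝕂 := 𝕜) c).smul_const x using 2 with m
  simp [pow_apply_of_apply_eq_smul hx, smul_smul]

end Exp

theorem inner_apply_of_eigen {E ι : Type*} [NormedAddCommGroup E] [InnerProductSpace ℂ E]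
    [DecidableEq ι] {φv : ι → Fin 2 → E}
    (hinner : ∀ k l ε η, ⟪φv k ε, φv l η⟫_ℂ = if k = l ∧ ε = η then (1 / 2 : ℂ) else 0)
    {ψ : ι → E} (hψ : ∀ k, ψ k = φv k 0 + φv k 1)
    {A : E →L[ℂ] E} {a b : ℂ} (ha : ∀ k, A (φv k 0) = a • φv k 0)
    (hb : ∀ k, A (φv k 1) = b • φv k 1) (k l : ι) :
    ⟪ψ k, A (ψ l)⟫_ℂ = if k = l then (a + b) / 2 else 0 := by
  simp only [hψ, map_add, ha, hb, inner_add_left, inner_add_right, inner_smul_right, hinner]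
  by_cases hkl : k = l <;> simp [hkl]
  ring

def meanPhase (ω₁ ω₂ t : ℝ) : ℂ := (cexp (-(I * t) * ω₁) + cexp (-(I * t) * ω₂)) / 2

theorem meanPhase_neg (ω₁ ω₂ t : ℝ) : meanPhase ω₁ ω₂ (-t) = conj (meanPhase ω₁ ω₂ t) := by
  simp only [meanPhase, map_div₀, map_add, ← Complex.exp_conj, map_mul, map_neg, Complex.conj_I,
    Complex.conj_ofReal, map_ofNat]
  push_cast; ring_nf

theorem normSq_meanPhase (ω₁ ω₂ t : ℝ) :
    normSq (meanPhase ω₁ ω₂ t) = Real.cos ((ω₂ - ω₁) / 2 * t) ^ 2 := by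
  have hfactor : meanPhase ω₁ ω₂ t = cexp (((-((ω₁ + ω₂) / 2 * t) : ℝ) : ℂ) * I) *
      Complex.cos (((ω₂ - ω₁) / 2 * t : ℝ) : ℂ) := by
    rw [meanPhase, Complex.cos, mul_div_assoc', mul_add, ← Complex.exp_add, ← Complex.exp_add]
    push_cast; ring_nf
  rw [hfactor, normSq_mul, Complex.normSq_eq_norm_sq, Complex.norm_exp_ofReal_mul_I,
    ← Complex.ofReal_cos, Complex.normSq_ofReal]
  ring

theorem timeEv_apply_of_apply_eq_smul {h : H →L[ℂ] H} {ω : ℂ} {x : H} (hx : h x = ω • x)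
    (t : ℝ) : timeEv h t x = cexp (-(I * t) * ω) • x := by
  rw [timeEv, exp_apply_of_apply_eq_smul (c := -(I * t) * ω), Complex.exp_eq_exp_ℂ]
  rw [smul_apply, hx, smul_smul]

section Trace

variable {ι : Type*} [Fintype ι]

theorem tr_comp_comm (A B : H →L[ℂ] H) : tr (A ∘L B) = tr (B ∘L A) :=
  LinearMap.trace_comp_comm' B.toLinearMap A.toLinearMap

theorem tr_comp_sum_smul_ketbra (A : H →L[ℂ] H) (c : ι → ℂ) (ψ : ι → H) :
    tr (A ∘L ∑ k, c k • ketbra (ψ k) (ψ k)) = ∑ k, c k * ⟪ψ k, A (ψ k)⟫_ℂ := by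
  have hcomp : A ∘L ∑ k, c k • ketbra (ψ k) (ψ k) = ∑ k, c k • ketbra (A (ψ k)) (ψ k) := by
    ext x; simp [ketbra]
  rw [hcomp]
  simp [tr, map_sum, ketbra, ← InnerProductSpace.rankOne_def, InnerProductSpace.trace_rankOne]

theorem tr_comp_sum_smul_ketbra_of_inner_eq {A : H →L[ℂ] H} {c : ι → ℂ} {ψ : ι → H} {a : ℂ}
    (hc : ∑ k, c k = 1) (hA : ∀ k, ⟪ψ k, A (ψ k)⟫_ℂ = a) :
    tr (A ∘L ∑ k, c k • ketbra (ψ k) (ψ k)) = a := by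
  simp only [tr_comp_sum_smul_ketbra, hA, ← Finset.sum_mul, hc, one_mul]

theorem tr_sum_ketbra_comp_comp_sum_smul_ketbra_comp [DecidableEq ι] {ψ : ι → H} {c : ι → ℂ}
    (hc : ∑ k, c k = 1) {U V : H →L[ℂ] H} {u v : ℂ}
    (hU : ∀ k l, ⟪ψ k, U (ψ l)⟫_ℂ = if k = l then u else 0)
    (hV : ∀ k l, ⟪ψ k, V (ψ l)⟫_ℂ = if k = l then v else 0) :
    tr ((∑ k, ketbra (ψ k) (ψ k)) ∘L U ∘L (∑ k, c k • ketbra (ψ k) (ψ k)) ∘L V) = v * u := by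
  have hρV : ∀ l, (∑ k, c k • ketbra (ψ k) (ψ k)) (V (ψ l)) = (c l * v) • ψ l := by
    intro l
    simp [ketbra, hV, smul_smul]
  have hterm : ∀ l, ⟪ψ l, (U ∘L (∑ k, c k • ketbra (ψ k) (ψ k)) ∘L V) (ψ l)⟫_ℂ = c l * (v * u) := by
    intro l
    simp only [ContinuousLinearMap.comp_apply, hρV, map_smul, inner_smul_right, hU, if_true]
    ring
  have hPr : ∑ k, ketbra (ψ k) (ψ k) = ∑ k, (1 : ℂ) • ketbra (ψ k) (ψ k) := by simp
  rw [tr_comp_comm, hPr, tr_comp_sum_smul_ketbra]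
  simp only [hterm, one_mul, ← Finset.sum_mul, hc]

end Trace

theorem stmt19_general {n : ℕ} (h ρ : H →L[ℂ] H)
    (ω₁ ω₂ : ℝ) (hω : ω₁ < ω₂)
    (φv : Fin n → Fin 2 → H)
    (heig1 : ∀ k, h (φv k 0) = (ω₁ : ℂ) • φv k 0)
    (heig2 : ∀ k, h (φv k 1) = (ω₂ : ℂ) • φv k 1)
    (hinner : ∀ k l ε η, ⟪φv k ε, φv l η⟫_ℂ = if k = l ∧ ε = η then (1 / 2 : ℂ) else 0)
    (ψ : Fin n → H) (hψ : ∀ k, ψ k = φv k 0 + φv k 1)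
    (lam : Fin n → ℝ) (hsum : ∑ k, lam k = 1)
    (hρ : ρ = ∑ k, (lam k : ℂ) • ketbra (ψ k) (ψ k))
    (Pr : H →L[ℂ] H) (hPr : Pr = ∑ k, ketbra (ψ k) (ψ k)) :
    Real.sqrt (varMix h ρ) = (ω₂ - ω₁) / 2 ∧
      ∀ t : ℝ, survPMix h ρ Pr t = Real.cos (Real.sqrt (varMix h ρ) * t) ^ 2 := by
  have hsumC : ∑ k, (lam k : ℂ) = 1 := by exact_mod_cast hsum
  have hsq : ∀ {ω : ℂ} {x : H}, h x = ω • x → (h ∘L h) x = (ω * ω) • x := fun hx => by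
    rw [ContinuousLinearMap.comp_apply, hx, map_smul, hx, smul_smul]
  have hmean : tr (h ∘L ρ) = ((ω₁ + ω₂) / 2 : ℝ) := by
    rw [hρ, tr_comp_sum_smul_ketbra_of_inner_eq hsumC fun k => by
      simpa using inner_apply_of_eigen hinner hψ heig1 heig2 k k]
    push_cast; ring
  have hmeanSq : tr (h ∘L h ∘L ρ) = ((ω₁ * ω₁ + ω₂ * ω₂) / 2 : ℝ) := by
    rw [← ContinuousLinearMap.comp_assoc, hρ, tr_comp_sum_smul_ketbra_of_inner_eq hsumC fun k => by
      simpa using inner_apply_of_eigen hinner hψ (fun k => hsq (heig1 k))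
        (fun k => hsq (heig2 k)) k k]
    push_cast; ring
  have hsd : Real.sqrt (varMix h ρ) = (ω₂ - ω₁) / 2 := by
    rw [varMix, expMix, hmean, hmeanSq, Complex.ofReal_re, Complex.ofReal_re,
      ← Real.sqrt_sq (by linarith : 0 ≤ (ω₂ - ω₁) / 2)]
    ring_nf
  have hphase : ∀ s k l, ⟪ψ k, timeEv h s (ψ l)⟫_ℂ = if k = l then meanPhase ω₁ ω₂ s else 0 :=
    fun s => inner_apply_of_eigen hinner hψ (fun k => timeEv_apply_of_apply_eq_smul (heig1 k) s)
      (fun k => timeEv_apply_of_apply_eq_smul (heig2 k) s)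
  refine ⟨hsd, fun t => ?_⟩
  rw [hsd, survPMix, hρ, hPr,
    tr_sum_ketbra_comp_comp_sum_smul_ketbra_comp hsumC (hphase t) (hphase (-t)), meanPhase_neg,
    ← Complex.normSq_eq_conj_mul_self, Complex.ofReal_re, normSq_meanPhase]

theorem stmt19 {n : ℕ} (h ρ : H →L[ℂ] H) (hsa : IsSelfAdjoint h)
    (ω₁ ω₂ : ℝ) (hω : ω₁ < ω₂)
    (φv : Fin n → Fin 2 → H)
    (heig1 : ∀ k, h (φv k 0) = (ω₁ : ℂ) • φv k 0)
    (heig2 : ∀ k, h (φv k 1) = (ω₂ : ℂ) • φv k 1)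
    (hinner : ∀ k l ε η, ⟪φv k ε, φv l η⟫_ℂ = if k = l ∧ ε = η then (1 / 2 : ℂ) else 0)
    (ψ : Fin n → H) (hψ : ∀ k, ψ k = φv k 0 + φv k 1)
    (lam : Fin n → ℝ) (hpos : ∀ k, 0 < lam k) (hsum : ∑ k, lam k = 1)
    (hρ : ρ = ∑ k, (lam k : ℂ) • ketbra (ψ k) (ψ k))
    (Pr : H →L[ℂ] H) (hPr : Pr = ∑ k, ketbra (ψ k) (ψ k)) :
    Real.sqrt (varMix h ρ) = (ω₂ - ω₁) / 2 ∧
      ∀ t : ℝ, survPMix h ρ Pr t = Real.cos (Real.sqrt (varMix h ρ) * t) ^ 2 :=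
  stmt19_general h ρ ω₁ ω₂ hω φv heig1 heig2 hinner ψ hψ lam hsum hρ Pr hPr
end
end
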